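/- arXiv:1309.4122 — 5 statements merged into one kernel-verified Lean document; each statement's English description precedes it below -/
import Mathlib

section
/- Let T be a tree and let x be a point of the arboreal singularity L_T (the gluing of Euclidean spaces L_T(α) = ℝ^{V(T)\{α}} along edge gluings). Then the full subgraph S of T on the set of vertices α with x ∈ L_T(α) is connected, hence S is a subtree of T. -/
/-- The basic gluing relation for the arboreal singularity of a graph `G`:
points of the chart `L_T(α) = ℝ^{V}` (the `α`-coordinate being irrelevant) are
identified within a chart when they agree off `α`, and across an edge `{α,β}`
by the edge gluing `x_β(α) = x_α(β) ≥ 0`, `x_γ(α) = x_γ(β)` for `γ ≠ α, β`. -/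
def baseRel {V : Type*} (G : SimpleGraph V) :
    (Σ _ : V, V → ℝ) → (Σ _ : V, V → ℝ) → Prop := fun a b =>
  (a.1 = b.1 ∧ ∀ γ, γ ≠ a.1 → a.2 γ = b.2 γ) ∨
  (G.Adj a.1 b.1 ∧ a.2 b.1 = b.2 a.1 ∧ 0 ≤ a.2 b.1 ∧
    ∀ γ, γ ≠ a.1 → γ ≠ b.1 → a.2 γ = b.2 γ)

theorem exists_walk {V : Type*} {G : SimpleGraph V} :
    ∀ {a b : Σ _ : V, V → ℝ}, Relation.EqvGen (baseRel G) a b →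
    ∃ w : G.Walk a.1 b.1, ∀ δ ∈ w.support, ∃ f : V → ℝ,
      Relation.EqvGen (baseRel G) ⟨δ, f⟩ a := by
  intro a b h
  induction h with
  | rel a b hab =>
    rcases hab with ⟨h1, h2⟩ | ⟨hadj, h2⟩
    · refine ⟨SimpleGraph.Walk.nil.copy h1.symm rfl, ?_⟩
      intro δ hδ
      simp at hδ
      subst hδ
      refine ⟨a.2, ?_⟩
      rw [← h1]
      exact Relation.EqvGen.refl a
    · refine ⟨SimpleGraph.Walk.cons hadj SimpleGraph.Walk.nil, ?_⟩
      intro δ hδ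
      simp at hδ
      rcases hδ with h | h
      · exact ⟨a.2, h ▸ Relation.EqvGen.refl _⟩
      · exact ⟨b.2, h ▸ (Relation.EqvGen.symm _ _ (Relation.EqvGen.rel _ _ (Or.inr ⟨hadj, h2⟩)))⟩
  | refl a => exact ⟨SimpleGraph.Walk.nil, fun δ hδ => by simp at hδ; exact ⟨a.2, hδ ▸ Relation.EqvGen.refl _⟩⟩
  | symm a b hab ih =>
    obtain ⟨w, hw⟩ := ih
    refine ⟨w.reverse, fun δ hδ => ?_⟩
    obtain ⟨f, hf⟩ := hw δ (by simpa using hδ)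
    exact ⟨f, hf.trans _ _ _ hab⟩
  | trans a b c hab hbc ih1 ih2 =>
    obtain ⟨w1, hw1⟩ := ih1
    obtain ⟨w2, hw2⟩ := ih2
    refine ⟨w1.append w2, fun δ hδ => ?_⟩
    rcases (SimpleGraph.Walk.mem_support_append_iff _ _).mp hδ with h | h
    · exact hw1 δ h
    · obtain ⟨f, hf⟩ := hw2 δ h
      exact ⟨f, hf.trans _ _ _ (Relation.EqvGen.symm _ _ hab)⟩

theorem walk_reach {V : Type*} {G : SimpleGraph V} {s : Set V} :
    ∀ {a b : V} (w : G.Walk a b) (hs : ∀ δ ∈ w.support, δ ∈ s),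
    (G.induce s).Reachable ⟨a, hs a w.start_mem_support⟩ ⟨b, hs b w.end_mem_support⟩ := by
  intro a b w
  induction w with
  | nil => intro hs; rfl
  | @cons a c b adj w ih =>
    intro hs
    have h1 : ∀ δ ∈ w.support, δ ∈ s := fun δ hδ => hs δ (by simp [hδ])
    refine (SimpleGraph.Adj.reachable ?_).trans (ih h1)
    exact adj

/-- For a point `x` of the arboreal singularity `L_T` of a tree `T`, the full
subgraph on the set of vertices `α` with `x ∈ L_T(α)` is connected, hence a subtree. -/
theorem stmt3 {V : Type*} [Fintype V] (G : SimpleGraph V) (hG : G.IsTree)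
    (x : Quot (baseRel G)) :
    (G.induce {α : V | ∃ f : V → ℝ, Quot.mk (baseRel G) ⟨α, f⟩ = x}).Connected := by
  obtain ⟨⟨α₀, f₀⟩, rfl⟩ := Quot.exists_rep x
  set s : Set V := {α : V | ∃ f : V → ℝ, Quot.mk (baseRel G) ⟨α, f⟩ = Quot.mk (baseRel G) ⟨α₀, f₀⟩} with hs
  haveI : Nonempty ↥s := ⟨⟨α₀, f₀, rfl⟩⟩
  refine ⟨?_⟩
  · rintro ⟨α, f, hf⟩ ⟨β, g, hg⟩
    have h : Relation.EqvGen (baseRel G) ⟨α, f⟩ ⟨β, g⟩ :=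
      Quot.eqvGen_exact (hf.trans hg.symm)
    obtain ⟨w, hw⟩ := exists_walk h
    have hsup : ∀ δ ∈ w.support, δ ∈ s := by
      intro δ hδ
      obtain ⟨fδ, hfδ⟩ := hw δ hδ
      exact ⟨fδ, (Quot.eqvGen_sound hfδ).trans hf⟩
    exact walk_reach w hsup
end

section
/- Let T be a tree with two adjacent vertices α, β, and consider the arboreal singularity L_T. Points of L_T(α) and L_T(β) are identified in L_T precisely when x_β(α) = x_α(β) ≥ 0 and x_γ(α) = x_γ(β) for all γ ≠ α, β. More generally, for α, β at distance k joined by the minimal path γ_0 = α, γ_1, …, γ_k = β, the identification of L_T(α) with L_T(β) inside L_T holds precisely when x_{γ_1}(α) = x_α(β), x_{γ_2}(α) = x_{γ_1}(β), …, x_β(α) = x_{γ_{k−1}}(β) ≥ 0, and x_γ(α) = x_γ(β) for all γ not on the path. -/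
/-
Along a single edge `u — v` the gluing condition of the statement is one step of `baseRel`,
taking `x` to `update x u (x v)`; composing these steps along a path glues its endpoints.
Conversely, if `a` and `b` are related by `baseRel` and `b` is glued to `c` along a path, then `a`
is glued to `c` along a path: the new edge either extends the path or, since the graph is acyclic,
retraces its first edge. As `baseRel` is symmetric, its equivalence closure therefore only relates
points glued along a path, and in a tree that is the unique path between their charts.
-/

section

variable {V : Type*} {G : SimpleGraph V}

theorem baseRel_symm {a b : Σ _ : V, V → ℝ} (h : baseRel G a b) : baseRel G b a := by
  rcases h with ⟨h1, h2⟩ | ⟨h1, h2, h3, h4⟩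
  · exact Or.inl ⟨h1.symm, fun γ hγ => (h2 γ (h1 ▸ hγ)).symm⟩
  · exact Or.inr ⟨h1.symm, h2.symm, h2 ▸ h3, fun γ hb ha => (h4 γ ha hb).symm⟩

theorem baseRel_update_of_adj [DecidableEq V] {u v : V} {x : V → ℝ} (h : G.Adj u v)
    (hx : 0 ≤ x v) :
    baseRel G ⟨u, x⟩ ⟨v, Function.update x u (x v)⟩ :=
  Or.inr ⟨h, by simp, hx, fun γ hγu _ => (Function.update_of_ne hγu _ _).symm⟩

namespace SimpleGraph.Walk

open Function

def GluedAlong {α β : V} (p : G.Walk α β) (x y : V → ℝ) : Prop :=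
  (∀ i < p.length, x (p.getVert (i + 1)) = y (p.getVert i) ∧ 0 ≤ x (p.getVert (i + 1))) ∧
  ∀ γ, γ ∉ p.support → x γ = y γ

variable {x x' y : V → ℝ}

theorem gluedAlong_nil {α : V} : (nil : G.Walk α α).GluedAlong x y ↔ ∀ γ, γ ≠ α → x γ = y γ := by
  simp [GluedAlong]

theorem IsPath.gluedAlong_cons_iff [DecidableEq V] {u v w : V} {h : G.Adj u v} {p : G.Walk v w}
    (hp : (cons h p).IsPath) :
    (cons h p).GluedAlong x y ↔ 0 ≤ x v ∧ p.GluedAlong (update x u (x v)) y := by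
  have hu : u ∉ p.support := ((cons_isPath_iff h p).1 hp).2
  have hshift : ∀ i, update x u (x v) (p.getVert i) = x (p.getVert i) := fun i =>
    update_of_ne (by rintro he; exact hu (he ▸ p.getVert_mem_support i)) _ _
  have hoff : (∀ γ ∉ p.support, update x u (x v) γ = y γ) ↔
      x v = y u ∧ ∀ γ, γ ≠ u ∧ γ ∉ p.support → x γ = y γ := by
    refine ⟨fun hy => ⟨by simpa using hy u hu, fun γ ⟨hγu, hγ⟩ => ?_⟩, fun ⟨hv, hy⟩ γ hγ => ?_⟩
    · rw [← hy γ hγ, update_of_ne hγu]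
    · rcases eq_or_ne γ u with rfl | hγu
      · simpa using hv
      · rw [update_of_ne hγu]
        exact hy γ ⟨hγu, hγ⟩
  simp only [GluedAlong, length_cons, Nat.forall_lt_succ_left, getVert_cons_succ, getVert_zero,
    support_cons, List.mem_cons, not_or, hshift, hoff]
  tauto

theorem IsPath.gluedAlong_congr_left {α β : V} {p : G.Walk α β} (hp : p.IsPath)
    (hx : ∀ γ, γ ≠ α → x γ = x' γ) : p.GluedAlong x y ↔ p.GluedAlong x' y := by
  have hshift : ∀ i < p.length, x (p.getVert (i + 1)) = x' (p.getVert (i + 1)) := fun i hi =>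
    hx _ (by rw [Ne, hp.getVert_eq_start_iff (by omega)]; omega)
  have hoff : ∀ γ, γ ∉ p.support → x γ = x' γ := fun γ hγ =>
    hx γ (fun he => hγ (he ▸ p.start_mem_support))
  exact and_congr (forall₂_congr fun i hi => by rw [hshift i hi])
    (forall₂_congr fun γ hγ => by rw [hoff γ hγ])

theorem GluedAlong.quot_mk_eq {α β : V} {p : G.Walk α β} (hp : p.IsPath)
    (hc : p.GluedAlong x y) : Quot.mk (baseRel G) ⟨α, x⟩ = Quot.mk (baseRel G) ⟨β, y⟩ := by
  classical
  induction p generalizing x with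
  | nil => exact Quot.sound (Or.inl ⟨rfl, gluedAlong_nil.1 hc⟩)
  | @cons u v w h p ih =>
    obtain ⟨hx, hc'⟩ := hp.gluedAlong_cons_iff.1 hc
    exact (Quot.sound (baseRel_update_of_adj h hx)).trans (ih hp.of_cons hc')

theorem gluedAlong_cons_nil_iff {α β : V} (h : G.Adj α β) :
    (cons h nil).GluedAlong x y ↔ x β = y α ∧ 0 ≤ x β ∧ ∀ γ, γ ≠ α → γ ≠ β → x γ = y γ := by
  simp only [GluedAlong, length_cons, length_nil, zero_add, Nat.lt_one_iff, forall_eq,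
    getVert_cons_succ, getVert_nil, getVert_zero, support_cons, support_nil, List.mem_cons,
    List.not_mem_nil, or_false, not_or, and_imp, ne_eq]
  tauto

end SimpleGraph.Walk

open SimpleGraph Walk Function


def PathGlued (G : SimpleGraph V) (a b : Σ _ : V, V → ℝ) : Prop :=
  ∃ p : G.Walk a.1 b.1, p.IsPath ∧ p.GluedAlong a.2 b.2

theorem update_eq_of_glued [DecidableEq V] {u v : V} {x y : V → ℝ} (hxy : x v = y u)
    (hoff : ∀ γ, γ ≠ u → γ ≠ v → x γ = y γ) : ∀ γ, γ ≠ v → update x u (x v) γ = y γ := by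
  intro γ hγv
  rcases eq_or_ne γ u with rfl | hγu
  · simpa using hxy
  · rw [update_of_ne hγu]
    exact hoff γ hγu hγv

theorem SimpleGraph.IsAcyclic.pathGlued_of_baseRel (hG : G.IsAcyclic) {a b c : Σ _ : V, V → ℝ}
    (hab : baseRel G a b) (hbc : PathGlued G b c) : PathGlued G a c := by
  classical
  obtain ⟨α₀, w⟩ := a
  obtain ⟨α, x⟩ := b
  obtain ⟨β, y⟩ := c
  obtain ⟨p, hp, hc⟩ := hbc
  rcases hab with ⟨rfl, hoff⟩ | ⟨hadj, hwx, hw, hoff⟩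
  · exact ⟨p, hp, (hp.gluedAlong_congr_left hoff).2 hc⟩
  by_cases hm : α₀ ∈ p.support
  · cases p with
    | nil => exact absurd (by simpa using hm) hadj.ne
    | @cons _ v _ h p =>
      obtain rfl : α₀ = v := by simpa using hG.eq_snd_of_adj_start hp hadj.symm hm
      have hoff' := update_eq_of_glued hwx.symm fun γ hα hα₀ => (hoff γ hα₀ hα).symm
      exact ⟨p, hp.of_cons,
        (hp.of_cons.gluedAlong_congr_left hoff').1 (hp.gluedAlong_cons_iff.1 hc).2⟩
  · have hq : (cons hadj p).IsPath := (cons_isPath_iff hadj p).2 ⟨hp, hm⟩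
    have hoff' := update_eq_of_glued hwx hoff
    exact ⟨cons hadj p, hq, hq.gluedAlong_cons_iff.2
      ⟨hw, (hp.gluedAlong_congr_left fun γ hγ => (hoff' γ hγ).symm).1 hc⟩⟩

theorem SimpleGraph.IsAcyclic.pathGlued_of_eqvGen (hG : G.IsAcyclic) {a b : Σ _ : V, V → ℝ}
    (h : Relation.EqvGen (baseRel G) a b) : PathGlued G a b := by
  have : Std.Symm (baseRel G) := ⟨fun _ _ => baseRel_symm⟩
  rw [Relation.EqvGen.eqvGen_eq_reflTransGen] at h
  induction h using Relation.ReflTransGen.head_induction_on with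
  | refl => exact ⟨nil, .nil, gluedAlong_nil.2 fun _ _ => rfl⟩
  | head hab _ ih => exact hG.pathGlued_of_baseRel hab ih

theorem SimpleGraph.IsAcyclic.quot_mk_eq_iff_gluedAlong (hG : G.IsAcyclic) {α β : V}
    {p : G.Walk α β} (hp : p.IsPath) {x y : V → ℝ} :
    Quot.mk (baseRel G) ⟨α, x⟩ = Quot.mk (baseRel G) ⟨β, y⟩ ↔ p.GluedAlong x y := by
  refine ⟨fun h => ?_, GluedAlong.quot_mk_eq hp⟩
  obtain ⟨q, hq, hc⟩ := hG.pathGlued_of_eqvGen (Quot.eqvGen_exact h)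
  obtain rfl : q = p := Subtype.mk.inj <| (hG.subsingleton_path α β).elim ⟨q, hq⟩ ⟨p, hp⟩
  exact hc

end

theorem stmt4_general {V : Type*} (G : SimpleGraph V) (hG : G.IsTree) :
    (∀ (α β : V) (x y : V → ℝ), G.Adj α β →
      (Quot.mk (baseRel G) ⟨α, x⟩ = Quot.mk (baseRel G) ⟨β, y⟩ ↔
        (x β = y α ∧ 0 ≤ x β ∧ ∀ γ, γ ≠ α → γ ≠ β → x γ = y γ))) ∧
    (∀ (α β : V) (p : G.Walk α β), p.IsPath → ∀ x y : V → ℝ,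
      (Quot.mk (baseRel G) ⟨α, x⟩ = Quot.mk (baseRel G) ⟨β, y⟩ ↔
        ((∀ i < p.length,
            x (p.getVert (i + 1)) = y (p.getVert i) ∧ 0 ≤ x (p.getVert (i + 1))) ∧
          ∀ γ, γ ∉ p.support → x γ = y γ))) :=
  ⟨fun _ _ _ _ h => (hG.isAcyclic.quot_mk_eq_iff_gluedAlong (SimpleGraph.Path.singleton h).2).trans
      (SimpleGraph.Walk.gluedAlong_cons_nil_iff h),
    fun _ _ _ hp _ _ => hG.isAcyclic.quot_mk_eq_iff_gluedAlong hp⟩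

/-- Identification of points of the charts `L_T(α)` and `L_T(β)` inside the
arboreal singularity `L_T`: for adjacent `α, β` it holds exactly under the edge
gluing conditions, and in general, along the minimal path `γ_0 = α, …, γ_k = β`,
exactly when `x_{γ_{i+1}}(α) = x_{γ_i}(β) ≥ 0` for all `i`, and
`x_γ(α) = x_γ(β)` for all `γ` off the path. -/
theorem stmt4 {V : Type*} [Fintype V] (G : SimpleGraph V) (hG : G.IsTree) :
    (∀ (α β : V) (x y : V → ℝ), G.Adj α β →
      (Quot.mk (baseRel G) ⟨α, x⟩ = Quot.mk (baseRel G) ⟨β, y⟩ ↔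
        (x β = y α ∧ 0 ≤ x β ∧ ∀ γ, γ ≠ α → γ ≠ β → x γ = y γ))) ∧
    (∀ (α β : V) (p : G.Walk α β), p.IsPath → ∀ x y : V → ℝ,
      (Quot.mk (baseRel G) ⟨α, x⟩ = Quot.mk (baseRel G) ⟨β, y⟩ ↔
        ((∀ i < p.length,
            x (p.getVert (i + 1)) = y (p.getVert i) ∧ 0 ≤ x (p.getVert (i + 1))) ∧
          ∀ γ, γ ∉ p.support → x γ = y γ))) :=
  stmt4_general G hG
end

section
/- Let T be a tree with at least two vertices, τ ∈ V(T) a terminal vertex with unique adjacent vertex α, and T_τ the tree obtained by deleting τ and the edge {τ,α}. Then there is a canonical homeomorphism L_T ≅ (L_{T_τ} × ℝ) ⊔_{L_{T_τ}(α) × {0}} (L_{T_τ}(α) × ℝ_{≤0}), i.e., L_T is the pushout gluing L_{T_τ}(α) × ℝ_{≤0} to L_{T_τ} × ℝ along L_{T_τ}(α) × {0}. -/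
/-
A point of `L_T` in a chart `L_T(β)` with `β ≠ τ` is a point of `L_{T_τ}(β)` together with the
free coordinate `x_τ(β) ∈ ℝ`. A point of the extra chart `L_T(τ)` is glued into `L_T(α)` as soon as
`x_α(τ) ≥ 0`, so only its part with `x_α(τ) ≤ 0` is new, and it is a copy of
`L_{T_τ}(α) × ℝ_{≤0}` meeting the rest along `x_α(τ) = 0`.
-/

def Homeomorph.ofQuotLift {X Y : Type*} [TopologicalSpace X] [TopologicalSpace Y]
    {r : X → X → Prop} {s : Y → Y → Prop} (f : X → Quot s) (g : Y → Quot r)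
    (hf : Continuous f) (hg : Continuous g)
    (hfr : ∀ a b, r a b → f a = f b) (hgs : ∀ a b, s a b → g a = g b)
    (hgf : ∀ x, Quot.lift g hgs (f x) = Quot.mk r x)
    (hfg : ∀ y, Quot.lift f hfr (g y) = Quot.mk s y) : Quot r ≃ₜ Quot s where
  toFun := Quot.lift f hfr
  invFun := Quot.lift g hgs
  left_inv := Quot.ind hgf
  right_inv := Quot.ind hfg
  continuous_toFun := continuous_quot_lift hfr hf
  continuous_invFun := continuous_quot_lift hgs hg

namespace Equiv

variable {ι Y : Type*} [DecidableEq ι] (i : ι) (y : Y) (z : {j // j ≠ i} → Y)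

lemma funSplitAt_symm_apply_self : (funSplitAt i Y).symm (y, z) i = y := by
  simp

lemma funSplitAt_symm_apply_of_ne {j : ι} (h : j ≠ i) :
    (funSplitAt i Y).symm (y, z) j = z ⟨j, h⟩ := by
  simp [h]

lemma funSplitAt_symm_apply_val (j : {j // j ≠ i}) : (funSplitAt i Y).symm (y, z) j = z j :=
  funSplitAt_symm_apply_of_ne i y z j.2

end Equiv

namespace ArborealSingularity

section Gluing

variable {V : Type*} {G : SimpleGraph V} {β δ : V} {x y : V → ℝ}

lemma mk_eq_mk_of_forall_ne (h : ∀ γ ≠ β, x γ = y γ) :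
    Quot.mk (baseRel G) ⟨β, x⟩ = Quot.mk (baseRel G) ⟨β, y⟩ :=
  Quot.sound (Or.inl ⟨rfl, h⟩)

lemma mk_eq_mk_of_adj (hadj : G.Adj β δ) (hxy : x δ = y β) (hx : 0 ≤ x δ)
    (h : ∀ γ, γ ≠ β → γ ≠ δ → x γ = y γ) :
    Quot.mk (baseRel G) ⟨β, x⟩ = Quot.mk (baseRel G) ⟨δ, y⟩ :=
  Quot.sound (Or.inr ⟨hadj, hxy, hx, h⟩)

end Gluing

variable {V : Type*} [DecidableEq V] (G : SimpleGraph V) {τ α : V} (hα : α ≠ τ)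

abbrev PushoutSum : Type _ :=
  (Quot (baseRel (G.induce {v | v ≠ τ})) × ℝ) ⊕
    (({w : {v : V // v ≠ τ} // w ≠ ⟨α, hα⟩} → ℝ) × {t : ℝ // t ≤ 0})

def pushoutRel : PushoutSum G hα → PushoutSum G hα → Prop := fun a b =>
  ∃ f : {w : {v : V // v ≠ τ} // w ≠ ⟨α, hα⟩} → ℝ,
    a = Sum.inr (f, ⟨0, le_refl 0⟩) ∧
      b = Sum.inl (Quot.mk _ ⟨(⟨α, hα⟩ : {v : V // v ≠ τ}),
        fun v => if h : v = (⟨α, hα⟩ : {v : V // v ≠ τ}) then 0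
          else f ⟨v, h⟩⟩, (0 : ℝ))

abbrev Pushout : Type _ := Quot (pushoutRel G hα)

def leftMk (β : {v : V // v ≠ τ}) (z : {v : V // v ≠ τ} → ℝ) (t : ℝ) : Pushout G hα :=
  Quot.mk _ (Sum.inl (Quot.mk _ ⟨β, z⟩, t))

def rightMk (f : {w : {v : V // v ≠ τ} // w ≠ ⟨α, hα⟩} → ℝ) (t : {t : ℝ // t ≤ 0}) :
    Pushout G hα :=
  Quot.mk _ (Sum.inr (f, t))

variable {G hα}

lemma leftMk_eq_of_baseRel {β δ : {v : V // v ≠ τ}} {z z' : {v : V // v ≠ τ} → ℝ} (t : ℝ)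
    (h : baseRel (G.induce {v | v ≠ τ}) ⟨β, z⟩ ⟨δ, z'⟩) :
    leftMk G hα β z t = leftMk G hα δ z' t := by
  unfold leftMk
  rw [Quot.sound h]

lemma leftMk_eq_of_forall_ne {β : {v : V // v ≠ τ}} {z z' : {v : V // v ≠ τ} → ℝ} (t : ℝ)
    (h : ∀ γ ≠ β, z γ = z' γ) : leftMk G hα β z t = leftMk G hα β z' t :=
  leftMk_eq_of_baseRel t (Or.inl ⟨rfl, h⟩)

lemma leftMk_eq_rightMk_of_eq_zero {z : {v : V // v ≠ τ} → ℝ}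
    {f : {w : {v : V // v ≠ τ} // w ≠ ⟨α, hα⟩} → ℝ} {t : ℝ} {s : {s : ℝ // s ≤ 0}}
    (hzf : ∀ w : {w : {v : V // v ≠ τ} // w ≠ ⟨α, hα⟩}, z w = f w) (ht : t = 0) (hs : s.1 = 0) :
    leftMk G hα ⟨α, hα⟩ z t = rightMk G hα f s := by
  obtain rfl : s = ⟨0, le_refl 0⟩ := Subtype.ext hs
  subst ht
  refine (leftMk_eq_of_forall_ne 0 fun v hv => ?_).trans (Quot.sound ⟨f, rfl, rfl⟩).symm
  rw [dif_neg hv, hzf ⟨v, hv⟩]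

variable (G hα)

/-- On the chart `τ` the value is clamped to `min (x α) 0` so that both branches are defined
everywhere; this is what makes the map continuous across `x α = 0`. -/
noncomputable def toPushout (p : Σ _ : V, V → ℝ) : Pushout G hα :=
  if hβ : p.1 = τ then
    if 0 ≤ p.2 α then leftMk G hα ⟨α, hα⟩ (fun v => p.2 v) (p.2 α)
    else rightMk G hα (fun w => p.2 w) ⟨min (p.2 α) 0, min_le_right _ _⟩
  else leftMk G hα ⟨p.1, hβ⟩ (fun v => p.2 v) (p.2 τ)

variable {G hα}

lemma toPushout_of_ne {β : V} (hβ : β ≠ τ) (x : V → ℝ) :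
    toPushout G hα ⟨β, x⟩ = leftMk G hα ⟨β, hβ⟩ (fun v => x v) (x τ) :=
  dif_neg hβ

lemma toPushout_self (x : V → ℝ) :
    toPushout G hα ⟨τ, x⟩ = if 0 ≤ x α then leftMk G hα ⟨α, hα⟩ (fun v => x v) (x α)
      else rightMk G hα (fun w => x w) ⟨min (x α) 0, min_le_right _ _⟩ :=
  dif_pos rfl

lemma toPushout_of_nonneg {x : V → ℝ} (h : 0 ≤ x α) :
    toPushout G hα ⟨τ, x⟩ = leftMk G hα ⟨α, hα⟩ (fun v => x v) (x α) := by
  rw [toPushout_self, if_pos h]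

lemma toPushout_of_neg {x : V → ℝ} (h : x α < 0) :
    toPushout G hα ⟨τ, x⟩ = rightMk G hα (fun w => x w) ⟨x α, h.le⟩ := by
  simp only [toPushout_self, if_neg h.not_ge, min_eq_left h.le]

lemma toPushout_eq_of_forall_ne {β : V} {x y : V → ℝ} (h : ∀ γ ≠ β, x γ = y γ) :
    toPushout G hα ⟨β, x⟩ = toPushout G hα ⟨β, y⟩ := by
  by_cases hβ : β = τ
  · subst β
    have hxy : x α = y α := h α hα
    rcases le_or_gt 0 (x α) with h0 | h0
    · rw [toPushout_of_nonneg h0, toPushout_of_nonneg (hxy ▸ h0), hxy]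
      exact leftMk_eq_of_forall_ne _ fun γ _ => h γ γ.2
    · rw [toPushout_of_neg h0, toPushout_of_neg (hxy ▸ h0)]
      congr 2
      exact funext fun w => h w w.1.2
  · rw [toPushout_of_ne hβ, toPushout_of_ne hβ, h τ (Ne.symm hβ)]
    exact leftMk_eq_of_forall_ne _ fun γ hγ => h γ fun e => hγ (Subtype.ext e)

lemma toPushout_eq_of_adj {x y : V → ℝ} (hxy : x α = y τ) (h0 : 0 ≤ x α)
    (h : ∀ γ, γ ≠ τ → γ ≠ α → x γ = y γ) :
    toPushout G hα ⟨τ, x⟩ = toPushout G hα ⟨α, y⟩ := by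
  rw [toPushout_of_nonneg h0, toPushout_of_ne hα, hxy]
  exact leftMk_eq_of_forall_ne _ fun γ hγ => h γ γ.2 fun e => hγ (Subtype.ext e)

lemma toPushout_sound (hterm : ∀ β, G.Adj τ β → β = α) (a b : Σ _ : V, V → ℝ)
    (hab : baseRel G a b) : toPushout G hα a = toPushout G hα b := by
  obtain ⟨β, x⟩ := a
  obtain ⟨δ, y⟩ := b
  rcases hab with ⟨rfl, h⟩ | ⟨hadj, hxy, h0, h⟩
  · exact toPushout_eq_of_forall_ne h
  dsimp only at hadj hxy h0 h
  by_cases hβ : β = τ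
  · subst β
    obtain rfl := hterm δ hadj
    exact toPushout_eq_of_adj hxy h0 h
  by_cases hδ : δ = τ
  · subst δ
    obtain rfl := hterm β hadj.symm
    exact (toPushout_eq_of_adj hxy.symm (hxy ▸ h0) fun γ h1 h2 => (h γ h2 h1).symm).symm
  rw [toPushout_of_ne hβ, toPushout_of_ne hδ, h τ (Ne.symm hβ) (Ne.symm hδ)]
  exact leftMk_eq_of_baseRel _ (Or.inr ⟨hadj, hxy, h0, fun γ h1 h2 =>
    h γ (fun e => h1 (Subtype.ext e)) fun e => h2 (Subtype.ext e)⟩)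

def extendChart (t : ℝ) (s : Σ _ : {v : V | v ≠ τ}, {v : V | v ≠ τ} → ℝ) : Σ _ : V, V → ℝ :=
  ⟨s.1, (Equiv.funSplitAt τ ℝ).symm (t, s.2)⟩

lemma baseRel_extendChart (t : ℝ) {a b : Σ _ : {v : V | v ≠ τ}, {v : V | v ≠ τ} → ℝ}
    (h : baseRel (G.induce {v | v ≠ τ}) a b) :
    baseRel G (extendChart t a) (extendChart t b) := by
  obtain ⟨⟨β, hβ⟩, z⟩ := a
  obtain ⟨⟨δ, hδ⟩, z'⟩ := b
  simp only [Set.mem_ofPred_eq] at hβ hδ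
  rcases h with ⟨h1, h⟩ | ⟨hadj, hzz, h0, h⟩
  · refine Or.inl ⟨congrArg Subtype.val h1, fun γ hγ => ?_⟩
    by_cases hγτ : γ = τ
    · simp [extendChart, hγτ]
    · simpa [extendChart, hγτ] using h ⟨γ, hγτ⟩ fun e => hγ (congrArg Subtype.val e)
  · refine Or.inr ⟨hadj, by simpa [extendChart, hβ, hδ] using hzz,
      by simpa [extendChart, hδ] using h0, fun γ h1 h2 => ?_⟩
    by_cases hγτ : γ = τ
    · simp [extendChart, hγτ]
    · simpa [extendChart, hγτ] using
        h ⟨γ, hγτ⟩ (fun e => h1 (congrArg Subtype.val e)) fun e => h2 (congrArg Subtype.val e)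

variable (G hα) in
noncomputable def ofPushout : PushoutSum G hα → Quot (baseRel G) :=
  Sum.elim
    (fun q => Quot.lift (fun s => Quot.mk _ (extendChart q.2 s))
      (fun _ _ h => Quot.sound (baseRel_extendChart q.2 h)) q.1)
    (fun p => Quot.mk _
      ⟨τ, (Equiv.funSplitAt τ ℝ).symm (0, (Equiv.funSplitAt ⟨α, hα⟩ ℝ).symm (p.2, p.1))⟩)

lemma ofPushout_sound (hadj : G.Adj τ α) (a b : PushoutSum G hα) (hab : pushoutRel G hα a b) :
    ofPushout G hα a = ofPushout G hα b := by
  obtain ⟨f, rfl, rfl⟩ := hab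
  refine mk_eq_mk_of_adj hadj (by simp [hα]) (by simp [hα]) fun γ h1 h2 => ?_
  simp [h1, h2, Subtype.ext_iff]

lemma ofPushout_toPushout (hadj : G.Adj τ α) (p : Σ _ : V, V → ℝ) :
    Quot.lift (ofPushout G hα) (ofPushout_sound hadj) (toPushout G hα p) = Quot.mk _ p := by
  obtain ⟨β, x⟩ := p
  by_cases hβ : β = τ
  · subst β
    rcases le_or_gt 0 (x α) with h0 | h0
    · rw [toPushout_of_nonneg h0]
      refine mk_eq_mk_of_adj hadj.symm ?_ ?_ fun γ _ hγ => ?_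
      · exact Equiv.funSplitAt_symm_apply_self _ _ _
      · simpa only [Equiv.funSplitAt_symm_apply_self] using h0
      · exact Equiv.funSplitAt_symm_apply_of_ne _ _ _ hγ
    · rw [toPushout_of_neg h0]
      refine mk_eq_mk_of_forall_ne fun γ hγ => ?_
      rw [Equiv.funSplitAt_symm_apply_of_ne _ _ _ hγ]
      by_cases hγα : γ = α
      · subst γ
        exact Equiv.funSplitAt_symm_apply_self _ _ _
      · exact Equiv.funSplitAt_symm_apply_of_ne _ _ _ fun e => hγα (congrArg Subtype.val e)
  · rw [toPushout_of_ne hβ]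
    exact congrArg (fun y => Quot.mk (baseRel G) ⟨β, y⟩)
      ((Equiv.funSplitAt τ ℝ).symm_apply_apply x)

lemma toPushout_extendChart (β : {v : V // v ≠ τ}) (z : {v : V // v ≠ τ} → ℝ) (t : ℝ) :
    toPushout G hα ⟨β, (Equiv.funSplitAt τ ℝ).symm (t, z)⟩ = leftMk G hα β z t := by
  rw [toPushout_of_ne β.2]
  simp only [Equiv.funSplitAt_symm_apply_val, Equiv.funSplitAt_symm_apply_self]

lemma toPushout_ofPushout (hterm : ∀ β, G.Adj τ β → β = α) (q : PushoutSum G hα) :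
    Quot.lift (toPushout G hα) (toPushout_sound hterm) (ofPushout G hα q) = Quot.mk _ q := by
  rcases q with ⟨q, t⟩ | ⟨f, t, ht⟩
  · induction q using Quot.ind with
    | mk p => exact toPushout_extendChart p.1 p.2 t
  change toPushout G hα ⟨τ, _⟩ = rightMk G hα f ⟨t, ht⟩
  rcases ht.lt_or_eq with ht | rfl
  · rw [toPushout_of_neg (by simpa [hα] using ht)]
    simp only [Equiv.funSplitAt_symm_apply_val, Equiv.funSplitAt_symm_apply_of_ne _ _ _ hα,
      Equiv.funSplitAt_symm_apply_self]
  · rw [toPushout_of_nonneg (by simp [hα])]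
    exact leftMk_eq_rightMk_of_eq_zero (fun w => by simp only [Equiv.funSplitAt_symm_apply_val])
      (by simp [hα]) rfl

variable (G hα)

lemma continuous_leftMk (β : {v : V // v ≠ τ}) :
    Continuous fun p : ({v : V // v ≠ τ} → ℝ) × ℝ => leftMk G hα β p.1 p.2 := by
  refine continuous_quot_mk.comp (continuous_inl.comp (Continuous.prodMk ?_ continuous_snd))
  exact continuous_quot_mk.comp (continuous_sigmaMk.comp continuous_fst)

lemma continuous_rightMk :
    Continuous fun p : ({w : {v : V // v ≠ τ} // w ≠ ⟨α, hα⟩} → ℝ) × {t : ℝ // t ≤ 0} =>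
      rightMk G hα p.1 p.2 :=
  continuous_quot_mk.comp continuous_inr

lemma continuous_toPushout : Continuous (toPushout G hα) := by
  refine continuous_sigma fun β => ?_
  by_cases hβ : β = τ
  · subst β
    have hleft := (continuous_leftMk G hα ⟨α, hα⟩).comp
      (f := fun x : V → ℝ => (fun v : {v // v ≠ τ} => x v, x α)) (by fun_prop)
    have hright := (continuous_rightMk G hα).comp
      (f := fun x : V → ℝ => (fun w : {w : {v : V // v ≠ τ} // w ≠ ⟨α, hα⟩} => x w,
        (⟨min (x α) 0, min_le_right _ _⟩ : {t : ℝ // t ≤ 0}))) (by fun_prop)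
    refine (hleft.if_le hright continuous_const (continuous_apply α) fun x hx =>
      leftMk_eq_rightMk_of_eq_zero (fun _ => rfl) hx.symm ?_).congr
      fun x => (toPushout_self x).symm
    simp [← hx]
  · exact ((continuous_leftMk G hα ⟨β, hβ⟩).comp
      (f := fun x : V → ℝ => (fun v : {v // v ≠ τ} => x v, x τ)) (by fun_prop)).congr
      fun x => (toPushout_of_ne hβ x).symm

lemma continuous_extendChart :
    Continuous fun p : (Σ _ : {v : V | v ≠ τ}, {v : V | v ≠ τ} → ℝ) × ℝ =>
      extendChart p.2 p.1 := by
  have hsplit : Continuous fun q : Σ _ : {v : V | v ≠ τ}, ({v : V | v ≠ τ} → ℝ) × ℝ =>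
      (⟨q.1, (Equiv.funSplitAt τ ℝ).symm q.2.swap⟩ : Σ _ : V, V → ℝ) :=
    continuous_sigma fun β => (continuous_sigmaMk (σ := fun _ : V => V → ℝ) (i := β.1)).comp
      ((Homeomorph.funSplitAt ℝ τ).symm.continuous.comp continuous_swap)
  exact hsplit.comp Homeomorph.sigmaProdDistrib.continuous

lemma continuous_ofPushout : Continuous (ofPushout G hα) := by
  refine Continuous.sumElim ?_ ?_
  · exact isQuotientMap_quot_mk.continuous_lift_prod_left
      (continuous_quot_mk.comp continuous_extendChart)
  · refine continuous_quot_mk.comp (continuous_sigmaMk.comp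
      ((Homeomorph.funSplitAt ℝ τ).symm.continuous.comp (continuous_const.prodMk ?_)))
    exact (Homeomorph.funSplitAt ℝ _).symm.continuous.comp
      ((continuous_subtype_val.comp continuous_snd).prodMk continuous_fst)

noncomputable def homeomorphPushout (hadj : G.Adj τ α) (hterm : ∀ β, G.Adj τ β → β = α) :
    Quot (baseRel G) ≃ₜ Pushout G hα :=
  .ofQuotLift (toPushout G hα) (ofPushout G hα) (continuous_toPushout G hα)
    (continuous_ofPushout G hα) (toPushout_sound hterm) (ofPushout_sound hadj)
    (ofPushout_toPushout hadj) (toPushout_ofPushout hterm)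

end ArborealSingularity

theorem stmt7_general {V : Type*} [DecidableEq V] (G : SimpleGraph V)
    (τ α : V) (hadj : G.Adj τ α)
    (hterm : ∀ β, G.Adj τ β → β = α) :
    Nonempty <|
      Quot (baseRel G) ≃ₜ
        Quot (fun a b :
            (Quot (baseRel (G.induce {v | v ≠ τ})) × ℝ) ⊕
              (({w : {v : V // v ≠ τ} // w ≠ ⟨α, hadj.ne'⟩} → ℝ) × {t : ℝ // t ≤ 0}) =>
          ∃ f : {w : {v : V // v ≠ τ} // w ≠ ⟨α, hadj.ne'⟩} → ℝ,
            a = Sum.inr (f, ⟨0, le_refl 0⟩) ∧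
              b = Sum.inl (Quot.mk _ ⟨(⟨α, hadj.ne'⟩ : {v : V // v ≠ τ}),
                fun v => if h : v = (⟨α, hadj.ne'⟩ : {v : V // v ≠ τ}) then 0
                  else f ⟨v, h⟩⟩, (0 : ℝ))) :=
  ⟨ArborealSingularity.homeomorphPushout G hadj.ne' hadj hterm⟩

/-- Let `τ` be a terminal vertex of a tree `T` with unique adjacent vertex `α`,
and `T_τ` the tree obtained by deleting `τ` and the edge `{τ, α}`.  Then the
arboreal singularity `L_T` is homeomorphic to the pushout gluing
`L_{T_τ}(α) × ℝ_{≤0}` to `L_{T_τ} × ℝ` along `L_{T_τ}(α) × {0}`. -/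
theorem stmt7 {V : Type*} [Fintype V] [DecidableEq V] (G : SimpleGraph V)
    (hG : G.IsTree) (τ α : V) (hadj : G.Adj τ α)
    (hterm : ∀ β, G.Adj τ β → β = α) :
    Nonempty <|
      Quot (baseRel G) ≃ₜ
        Quot (fun a b :
            (Quot (baseRel (G.induce {v | v ≠ τ})) × ℝ) ⊕
              (({w : {v : V // v ≠ τ} // w ≠ ⟨α, hadj.ne'⟩} → ℝ) × {t : ℝ // t ≤ 0}) =>
          ∃ f : {w : {v : V // v ≠ τ} // w ≠ ⟨α, hadj.ne'⟩} → ℝ,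
            a = Sum.inr (f, ⟨0, le_refl 0⟩) ∧
              b = Sum.inl (Quot.mk _ ⟨(⟨α, hadj.ne'⟩ : {v : V // v ≠ τ}),
                fun v => if h : v = (⟨α, hadj.ne'⟩ : {v : V // v ≠ τ}) then 0
                  else f ⟨v, h⟩⟩, (0 : ℝ))) :=
  stmt7_general G τ α hadj hterm
end

section
/- Let ⃗T = (T, ρ) be a rooted tree, with functions h_α defined recursively by h_ρ = x_ρ, h_α = f(h_{α̂}, x_α), and let F_⃗T: ℝ^{V(T)} → ℝ^{V(T)} be defined componentwise by F_ρ = x_ρ and F_α = φ(h_{α̂}, x_α) for α ≠ ρ, where φ(x_1,x_2) = x_2 for x_1 ≤ 0 and φ(x_1,x_2) = x_2 − b(x_1) for x_1 > 0. Then F_⃗T is a homeomorphism of ℝ^{V(T)} satisfying F_⃗T({h_α ≥ 0}) = {x : x_β ≥ 0 for all β ≤ α} for every vertex α. -/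
/-!
Write `c = 1_{(0,∞)} · b`, so that `F x = x - c (h_{α̂} x)` coordinatewise: `F` is a triangular
shear along the tree. Its inverse adds `c (H_{α̂} y)` back, where `H = h ∘ F⁻¹` satisfies the
same recursion as `h` with `f` replaced by `(t, s) ↦ f (t, s + c t)`; this makes both maps
continuous. The sign conditions on `f` say exactly that `f (t, s + c t) ≥ 0 ↔ t ≥ 0 ∧ s ≥ 0`,
so by induction along the tree `H_α y ≥ 0` iff `y_β ≥ 0` for all `β ≤ α`, and
`F {h_α ≥ 0} = {H_α ≥ 0}`.
-/

open Set Filter Topology Function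

lemma continuous_indicator_Ioi {M : Type*} [TopologicalSpace M] [Zero M] {a : ℝ} {b : ℝ → M}
    (hb : ContinuousOn b (Ioi a)) (hba : Tendsto b (𝓝[>] a) (𝓝 0)) :
    Continuous ((Ioi a).indicator b) := by
  have hfr : ∀ x ∈ frontier (Ioi a), x = a := fun x hx => by rwa [frontier_Ioi] at hx
  refine continuous_if' (fun x hx => ?_) (fun x hx => ?_) hb continuousOn_const <;>
    obtain rfl := hfr x hx <;> simp only [mem_Ioi, lt_self_iff_false, if_false]
  exacts [hba, tendsto_const_nhds]

lemma CovBy.le_iff_le_or_eq {V : Type*} [PartialOrder V] {a b c : V}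
    (hchain : ∀ x y, x ≤ c → y ≤ c → x ≤ y ∨ y ≤ x) (hac : a ⋖ c) :
    b ≤ c ↔ b ≤ a ∨ b = c := by
  refine ⟨fun hbc => ?_, ?_⟩
  · rcases hchain b a hbc hac.le with hba | hab
    · exact .inl hba
    · rcases hab.lt_or_eq with hab | rfl
      · exact .inr (hbc.eq_of_not_lt (hac.2 hab))
      · exact .inl le_rfl
  · rintro (hba | rfl)
    exacts [hba.trans hac.le, le_rfl]

def twist (g : ℝ → ℝ → ℝ) (c : ℝ → ℝ) (t s : ℝ) : ℝ := g t (s + c t)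

lemma twist_twist_neg (g : ℝ → ℝ → ℝ) (c : ℝ → ℝ) : twist (twist g c) (-c) = g := by
  ext t s; simp [twist]

lemma Continuous.twist {g : ℝ → ℝ → ℝ} (hg : Continuous (uncurry g)) {c : ℝ → ℝ}
    (hc : Continuous c) : Continuous (uncurry (twist g c)) :=
  hg.comp (continuous_fst.prodMk (continuous_snd.add (hc.comp continuous_fst)))

lemma twist_indicator_nonneg_iff {f : ℝ → ℝ → ℝ} {b : ℝ → ℝ}
    (hf_zero : ∀ x₁ x₂, f x₁ x₂ = 0 ↔ ((x₁ = 0 ∧ 0 ≤ x₂) ∨ (0 < x₁ ∧ x₂ = b x₁)))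
    (hf_pos : ∀ x₁ x₂, 0 < f x₁ x₂ ↔ (0 < x₁ ∧ b x₁ < x₂)) (t s : ℝ) :
    0 ≤ twist f ((Ioi 0).indicator b) t s ↔ 0 ≤ t ∧ 0 ≤ s := by
  rw [twist, le_iff_lt_or_eq, hf_pos, eq_comm, hf_zero]
  rcases lt_trichotomy t 0 with ht | rfl | ht
  · simp [ht.ne, not_lt.2 ht.le, not_le.2 ht]
  · simp
  · simp [ht, ht.ne', ht.le, ← le_iff_lt_or_eq']

section ShearMap

variable {V : Type*} [DecidableEq V] {ρ : V} {parent : V → V}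

variable (ρ parent) in
def shearMap (c : ℝ → ℝ) (H : V → (V → ℝ) → ℝ) (x : V → ℝ) (γ : V) : ℝ :=
  if γ = ρ then x ρ else x γ + c (H (parent γ) x)

@[simp]
lemma shearMap_root (c : ℝ → ℝ) (H : V → (V → ℝ) → ℝ) (x : V → ℝ) :
    shearMap ρ parent c H x ρ = x ρ := by
  simp [shearMap]

lemma shearMap_of_ne {γ : V} (hγ : γ ≠ ρ) (c : ℝ → ℝ) (H : V → (V → ℝ) → ℝ) (x : V → ℝ) :
    shearMap ρ parent c H x γ = x γ + c (H (parent γ) x) := by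
  simp [shearMap, hγ]

lemma shearMap_shearMap {c d : ℝ → ℝ} (hcd : ∀ t, c t + d t = 0) {H H' : V → (V → ℝ) → ℝ}
    {x : V → ℝ} (hH : ∀ γ, H γ (shearMap ρ parent d H' x) = H' γ x) :
    shearMap ρ parent c H (shearMap ρ parent d H' x) = x := by
  ext γ
  by_cases hγ : γ = ρ
  · simp [hγ]
  · rw [shearMap_of_ne hγ, shearMap_of_ne hγ, hH, add_assoc, add_comm (d _), hcd, add_zero]

lemma continuous_shearMap {c : ℝ → ℝ} (hc : Continuous c) {H : V → (V → ℝ) → ℝ}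
    (hH : ∀ γ, Continuous (H γ)) : Continuous (shearMap ρ parent c H) := by
  refine continuous_pi fun γ => ?_
  unfold shearMap
  split_ifs
  · exact continuous_apply ρ
  · exact (continuous_apply γ).add (hc.comp (hH _))

end ShearMap

def treeRec {V : Type*} [PartialOrder V] [WellFoundedLT V] [DecidableEq V] (ρ : V)
    (parent : V → V) (hpar : ∀ α, α ≠ ρ → parent α < α) (g : ℝ → ℝ → ℝ) (α : V)
    (x : V → ℝ) : ℝ :=
  if _ : α = ρ then x ρ else g (treeRec ρ parent hpar g (parent α) x) (x α)
termination_by wellFounded_lt.wrap α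
decreasing_by exact hpar α ‹_›

section TreeRec

variable {V : Type*} [PartialOrder V] [WellFoundedLT V] [DecidableEq V] {ρ : V}
  {parent : V → V} (hpar : ∀ α, α ≠ ρ → parent α < α)

@[simp]
lemma treeRec_root (g : ℝ → ℝ → ℝ) (x : V → ℝ) : treeRec ρ parent hpar g ρ x = x ρ := by
  rw [treeRec, dif_pos rfl]

lemma treeRec_of_ne (g : ℝ → ℝ → ℝ) {α : V} (hα : α ≠ ρ) (x : V → ℝ) :
    treeRec ρ parent hpar g α x = g (treeRec ρ parent hpar g (parent α) x) (x α) := by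
  rw [treeRec, dif_neg hα]

lemma eq_treeRec {g : ℝ → ℝ → ℝ} {h : V → (V → ℝ) → ℝ} (hroot : ∀ x, h ρ x = x ρ)
    (hrec : ∀ α, α ≠ ρ → ∀ x, h α x = g (h (parent α) x) (x α)) :
    h = treeRec ρ parent hpar g := by
  ext α x
  induction α using WellFoundedLT.induction with
  | _ α ih =>
    by_cases hα : α = ρ
    · subst hα; rw [hroot, treeRec_root]
    · rw [hrec α hα, treeRec_of_ne hpar g hα, ih _ (hpar α hα)]

lemma continuous_treeRec {g : ℝ → ℝ → ℝ} (hg : Continuous (uncurry g)) (α : V) :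
    Continuous (treeRec ρ parent hpar g α) := by
  induction α using WellFoundedLT.induction with
  | _ α ih =>
    by_cases hα : α = ρ
    · subst hα
      exact (continuous_apply α).congr fun x => (treeRec_root hpar g x).symm
    · rw [funext (treeRec_of_ne hpar g hα)]
      exact hg.comp ((ih _ (hpar α hα)).prodMk (continuous_apply α))

lemma treeRec_shearMap (g : ℝ → ℝ → ℝ) (c : ℝ → ℝ) (α : V) (y : V → ℝ) :
    treeRec ρ parent hpar g α (shearMap ρ parent c (treeRec ρ parent hpar (twist g c)) y) =
      treeRec ρ parent hpar (twist g c) α y := by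
  induction α using WellFoundedLT.induction with
  | _ α ih =>
    by_cases hα : α = ρ
    · subst hα; simp
    · rw [treeRec_of_ne hpar _ hα, treeRec_of_ne hpar _ hα, ih _ (hpar α hα),
        shearMap_of_ne hα, twist]

lemma treeRec_nonneg_iff {g : ℝ → ℝ → ℝ} (hg : ∀ t s, 0 ≤ g t s ↔ 0 ≤ t ∧ 0 ≤ s)
    (hroot : ∀ β, ρ ≤ β) (hIic : ∀ α, α ≠ ρ → ∀ β, β ≤ α ↔ β ≤ parent α ∨ β = α)
    (α : V) (x : V → ℝ) :
    0 ≤ treeRec ρ parent hpar g α x ↔ ∀ β ≤ α, 0 ≤ x β := by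
  induction α using WellFoundedLT.induction with
  | _ α ih =>
    by_cases hα : α = ρ
    · subst hα
      simp only [treeRec_root]
      exact ⟨fun h β hβ => le_antisymm hβ (hroot β) ▸ h, fun h => h _ le_rfl⟩
    · simp only [treeRec_of_ne hpar g hα, hg, ih _ (hpar α hα), hIic α hα, or_imp,
        forall_and, forall_eq]

def treeShearEquiv (g : ℝ → ℝ → ℝ) (c : ℝ → ℝ) : (V → ℝ) ≃ (V → ℝ) where
  toFun := shearMap ρ parent (-c) (treeRec ρ parent hpar g)
  invFun := shearMap ρ parent c (treeRec ρ parent hpar (twist g c))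
  left_inv x := shearMap_shearMap (fun t => add_neg_cancel (c t)) fun γ => by
    have := treeRec_shearMap hpar (twist g c) (-c) γ x
    rwa [twist_twist_neg] at this
  right_inv y := shearMap_shearMap (fun t => neg_add_cancel (c t)) (treeRec_shearMap hpar g c · y)

lemma treeShearEquiv_apply (g : ℝ → ℝ → ℝ) (c : ℝ → ℝ) :
    ⇑(treeShearEquiv hpar g c) = shearMap ρ parent (-c) (treeRec ρ parent hpar g) :=
  rfl

lemma treeRec_treeShearEquiv_symm (g : ℝ → ℝ → ℝ) (c : ℝ → ℝ) (α : V) (y : V → ℝ) :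
    treeRec ρ parent hpar g α ((treeShearEquiv hpar g c).symm y) =
      treeRec ρ parent hpar (twist g c) α y :=
  treeRec_shearMap hpar g c α y

lemma isHomeomorph_treeShearEquiv {g : ℝ → ℝ → ℝ} (hg : Continuous (uncurry g)) {c : ℝ → ℝ}
    (hc : Continuous c) : IsHomeomorph (treeShearEquiv hpar g c) :=
  Homeomorph.isHomeomorph
    { toEquiv := treeShearEquiv hpar g c
      continuous_toFun := continuous_shearMap hc.neg (continuous_treeRec hpar hg)
      continuous_invFun := continuous_shearMap hc (continuous_treeRec hpar (hg.twist hc)) }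

end TreeRec

open Classical in
theorem stmt16_general {V : Type*} [Fintype V] [DecidableEq V] [PartialOrder V]
    (ρ : V) (hroot_min : ∀ v, ρ ≤ v)
    (hchain : ∀ a b c : V, a ≤ c → b ≤ c → a ≤ b ∨ b ≤ a)
    (parent : V → V) (hpar : ∀ α, α ≠ ρ → parent α ⋖ α)
    (b : ℝ → ℝ)
    (hb_cont : ContinuousOn b (Set.Ioi 0))
    (hb_lim : Filter.Tendsto b (nhdsWithin 0 (Set.Ioi 0)) (nhds 0))
    (f : ℝ → ℝ → ℝ)
    (hf_cont : Continuous fun q : ℝ × ℝ => f q.1 q.2)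
    (hf_zero : ∀ x₁ x₂, f x₁ x₂ = 0 ↔ ((x₁ = 0 ∧ 0 ≤ x₂) ∨ (0 < x₁ ∧ x₂ = b x₁)))
    (hf_pos : ∀ x₁ x₂, 0 < f x₁ x₂ ↔ (0 < x₁ ∧ b x₁ < x₂))
    (h : V → (V → ℝ) → ℝ)
    (hroot : ∀ x, h ρ x = x ρ)
    (hrec : ∀ α, α ≠ ρ → ∀ x, h α x = f (h (parent α) x) (x α)) :
    IsHomeomorph (fun (x : V → ℝ) (γ : V) =>
      if γ = ρ then x ρ
      else if 0 < h (parent γ) x then x γ - b (h (parent γ) x) else x γ) ∧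
    ∀ α : V,
      (fun (x : V → ℝ) (γ : V) =>
          if γ = ρ then x ρ
          else if 0 < h (parent γ) x then x γ - b (h (parent γ) x) else x γ) ''
        {x | 0 ≤ h α x} = {x : V → ℝ | ∀ β, β ≤ α → 0 ≤ x β} := by
  have hpar_lt : ∀ α, α ≠ ρ → parent α < α := fun α hα => (hpar α hα).lt
  obtain rfl := eq_treeRec hpar_lt hroot hrec
  have hF : (fun (x : V → ℝ) (γ : V) =>
      if γ = ρ then x ρ
      else if 0 < treeRec ρ parent hpar_lt f (parent γ) x
        then x γ - b (treeRec ρ parent hpar_lt f (parent γ) x) else x γ) =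
      treeShearEquiv hpar_lt f ((Ioi 0).indicator b) := by
    ext x γ
    rw [treeShearEquiv_apply, shearMap]
    split_ifs <;> simp [*, sub_eq_add_neg]
  rw [hF]
  refine ⟨isHomeomorph_treeShearEquiv hpar_lt hf_cont (continuous_indicator_Ioi hb_cont hb_lim),
    fun α => ?_⟩
  ext y
  simp only [Equiv.image_eq_preimage_symm, mem_preimage, mem_ofPred_eq]
  rw [treeRec_treeShearEquiv_symm, treeRec_nonneg_iff hpar_lt
    (twist_indicator_nonneg_iff hf_zero hf_pos) hroot_min
    fun α hα β => (hpar α hα).le_iff_le_or_eq fun x y => hchain x y α]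

open Classical in
/-- The comparison map `F_{⃗T}` between the smoothed and rectilinear arboreal
hypersurfaces of a rooted tree `(T, ρ)`: with `h_ρ = x_ρ`,
`h_α = f(h_{α̂}, x_α)` and `φ(x₁, x₂) = x₂` for `x₁ ≤ 0`, `= x₂ - b x₁` for
`x₁ > 0`, the map `F` with components `F_ρ = x_ρ`, `F_α = φ(h_{α̂}, x_α)` is a
homeomorphism of `ℝ^{V(T)}` carrying each half-space `{h_α ≥ 0}` onto the
quadrant `{x_β ≥ 0 for all β ≤ α}`. -/
theorem stmt16 {V : Type*} [Fintype V] [DecidableEq V] [PartialOrder V]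
    (ρ : V) (hroot_min : ∀ v, ρ ≤ v)
    (hchain : ∀ a b c : V, a ≤ c → b ≤ c → a ≤ b ∨ b ≤ a)
    (parent : V → V) (hpar : ∀ α, α ≠ ρ → parent α ⋖ α)
    (b : ℝ → ℝ) (hb_nonpos : ∀ t, 0 < t → b t ≤ 0)
    (hb_cont : ContinuousOn b (Set.Ioi 0))
    (hb_lim : Filter.Tendsto b (nhdsWithin 0 (Set.Ioi 0)) (nhds 0))
    (hb_large : ∃ T : ℝ, ∀ t, T ≤ t → b t = 0)
    (f : ℝ → ℝ → ℝ)
    (hf_cont : Continuous fun q : ℝ × ℝ => f q.1 q.2)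
    (hf_zero : ∀ x₁ x₂, f x₁ x₂ = 0 ↔ ((x₁ = 0 ∧ 0 ≤ x₂) ∨ (0 < x₁ ∧ x₂ = b x₁)))
    (hf_pos : ∀ x₁ x₂, 0 < f x₁ x₂ ↔ (0 < x₁ ∧ b x₁ < x₂))
    (h : V → (V → ℝ) → ℝ)
    (hroot : ∀ x, h ρ x = x ρ)
    (hrec : ∀ α, α ≠ ρ → ∀ x, h α x = f (h (parent α) x) (x α)) :
    IsHomeomorph (fun (x : V → ℝ) (γ : V) =>
      if γ = ρ then x ρ
      else if 0 < h (parent γ) x then x γ - b (h (parent γ) x) else x γ) ∧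
    ∀ α : V,
      (fun (x : V → ℝ) (γ : V) =>
          if γ = ρ then x ρ
          else if 0 < h (parent γ) x then x γ - b (h (parent γ) x) else x γ) ''
        {x | 0 ≤ h α x} = {x : V → ℝ | ∀ β, β ≤ α → 0 ≤ x β} :=
  stmt16_general ρ hroot_min hchain parent hpar b hb_cont hb_lim f hf_cont hf_zero hf_pos h hroot
    hrec
end

section
/- Let ⃗T = (T, ρ) be a rooted tree with tree order on V(T), and let α, β ∈ V(T) with α ≰ β. In ℝ^{V(T)}, define U_γ = {x : x_δ < 0 for some δ ≤ γ} and ∂U_β = {x : x_δ ≥ 0 for all δ ≤ β, and x_δ = 0 for some δ ≤ β}. Then the set U_α ∩ ∂U_β is contractible. -/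
/-- For vertices `α ≰ β` of a rooted tree (tree order: bottom `ρ`, the set of
vertices below any vertex is a chain), the intersection of the open region
`U_α = {x : x_δ < 0 for some δ ≤ α}` with the boundary
`∂U_β = {x : x_δ ≥ 0 for all δ ≤ β, x_δ = 0 for some δ ≤ β}` is contractible
(in particular nonempty). -/
theorem stmt19 {V : Type*} [Fintype V] [PartialOrder V] [OrderBot V]
    (hchain : ∀ a b c : V, a ≤ c → b ≤ c → a ≤ b ∨ b ≤ a)
    (α β : V) (hαβ : ¬α ≤ β) :
    ContractibleSpace
      ↥({x : V → ℝ | ∃ δ, δ ≤ α ∧ x δ < 0} ∩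
        {x : V → ℝ | (∀ δ, δ ≤ β → 0 ≤ x δ) ∧ ∃ δ, δ ≤ β ∧ x δ = 0}) := by
  classical
  set c : V → ℝ := fun δ => if δ ≤ β then 0 else -1 with hc
  set s := ({x : V → ℝ | ∃ δ, δ ≤ α ∧ x δ < 0} ∩
        {x : V → ℝ | (∀ δ, δ ≤ β → 0 ≤ x δ) ∧ ∃ δ, δ ≤ β ∧ x δ = 0}) with hs
  have hcs : c ∈ s := by
    refine ⟨⟨α, le_refl α, ?_⟩, fun δ hδ => ?_, ⊥, bot_le, ?_⟩
    · simp [hc, hαβ]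
    · simp [hc, hδ]
    · simp [hc, (bot_le : (⊥ : V) ≤ β)]
  have hstar : StarConvex ℝ c s := by
    intro x hx a b ha hb hab
    obtain ⟨⟨δ₂, hδ₂α, hδ₂⟩, hpos, δ₁, hδ₁β, hδ₁⟩ := hx
    have hδ₂β : ¬ δ₂ ≤ β := fun h => absurd (hpos δ₂ h) (not_le.mpr hδ₂)
    have hcδ₂ : c δ₂ = -1 := by simp [hc, hδ₂β]
    clear hδ₂β hαβ hchain hcs
    refine ⟨⟨δ₂, hδ₂α, ?_⟩, fun δ hδ => ?_, δ₁, hδ₁β, ?_⟩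
    · skip
      have : a * c δ₂ + b * x δ₂ ≤ 0 := by
        have h1 : a * c δ₂ ≤ 0 := by rw [hcδ₂]; nlinarith
        have h2 : b * x δ₂ ≤ 0 := mul_nonpos_of_nonneg_of_nonpos hb hδ₂.le
        linarith
      rcases eq_or_lt_of_le ha with ha0 | ha0
      · have hb1 : b = 1 := by linarith
        simpa [← ha0, hb1] using hδ₂
      · have : a * c δ₂ < 0 := by rw [hcδ₂]; nlinarith
        have h2 : b * x δ₂ ≤ 0 := mul_nonpos_of_nonneg_of_nonpos hb hδ₂.le
        simpa using (by linarith : a * c δ₂ + b * x δ₂ < 0)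
    · have : c δ = 0 := by simp [hc, hδ]
      have hx0 : 0 ≤ x δ := hpos δ hδ
      simp only [Pi.add_apply, Pi.smul_apply, smul_eq_mul, this]
      nlinarith
    · have : c δ₁ = 0 := by simp [hc, hδ₁β]
      simp [this, hδ₁]
  exact hstar.contractibleSpace ⟨c, hcs⟩
end
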